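/- arXiv:1303.3277 — 5 statements merged into one kernel-verified Lean document; each statement's English description precedes it below -/
import Mathlib

section
/- Let α ≥ 1 be real and θ, γ > 0. For ε > 0 set λ_ε = θ/(γ·ε^α) and M_ε = ⌊(θ/γ)^{1/α}/ε⌋. Then there exist constants C > 0 and ε₀ > 0 such that for all 0 < ε ≤ ε₀: ∑_{k ≥ 4M_ε} π_{λ_ε}(k) ≤ C·2^{−α·M_ε}. -/
open scoped BigOperators

/-- Normalizing constant `Z(λ) = 1 + ∑_{j=1}^∞ λ^j/(j!)^α` (real power `(j!)^α`). -/
noncomputable def Zfun (α lam : ℝ) : ℝ :=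
  1 + ∑' j : ℕ, lam ^ (j + 1) / ((Nat.factorial (j + 1) : ℝ)) ^ α

/-- Stationary distribution `π_λ(k) = (λ^k/(k!)^α)/Z(λ)`. -/
noncomputable def statPi (α lam : ℝ) (k : ℕ) : ℝ :=
  (lam ^ k / ((Nat.factorial k : ℝ)) ^ α) / Zfun α lam

/-! With `x = (θ/γ)^(1/α)/ε` one has `λ = x^α`, so `π_λ(k) = (x^k/k!)^α / Z(λ)`. Beyond `k = 2⌊x⌋`
the ratio `x/(k+1)` of consecutive terms `x^k/k!` is at most `2/3`. Comparing the tail with the single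
term `k = 2⌊x⌋` of `Z(λ)` therefore costs a factor `((2/3)^(2⌊x⌋))^α ≤ 2^(-α⌊x⌋)`, and the remaining
geometric series sums to `3`. -/

open scoped Nat

lemma pow_succ_div_factorial_succ (x : ℝ) (k : ℕ) :
    x ^ (k + 1) / (k + 1)! = x ^ k / k ! * (x / (k + 1)) := by
  rw [pow_succ, Nat.factorial_succ]
  push_cast
  field_simp

lemma pow_div_factorial_le_geometric {x r : ℝ} {n : ℕ} (hx : 0 ≤ x) (hr : 0 ≤ r)
    (hratio : ∀ k, n ≤ k → x / (k + 1) ≤ r) (i : ℕ) :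
    x ^ (n + i) / (n + i)! ≤ r ^ i * (x ^ n / n !) := by
  refine le_geom (u := fun j ↦ x ^ (n + j) / (n + j)!) hr i fun j _ ↦ ?_
  have hstep := pow_succ_div_factorial_succ x (n + j)
  push_cast at hstep
  simp only [← add_assoc, hstep]
  rw [mul_comm r]
  exact mul_le_mul_of_nonneg_left (mod_cast hratio _ (Nat.le_add_right n j)) (by positivity)

lemma summable_Zfun_terms {α lam : ℝ} (hα : 1 ≤ α) (hlam : 0 ≤ lam) :
    Summable fun j : ℕ ↦ lam ^ (j + 1) / ((j + 1)! : ℝ) ^ α := by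
  refine .of_nonneg_of_le (fun j ↦ by positivity) (fun j ↦ ?_)
    ((summable_nat_add_iff 1).2 (Real.summable_pow_div_factorial lam))
  have hfac : (1 : ℝ) ≤ (j + 1)! := mod_cast Nat.one_le_iff_ne_zero.2 (Nat.factorial_ne_zero _)
  gcongr
  exact Real.self_le_rpow_of_one_le hfac hα

lemma pow_div_factorial_rpow_le_Zfun {α lam : ℝ} (hα : 1 ≤ α) (hlam : 0 ≤ lam) (k : ℕ) :
    lam ^ k / (k ! : ℝ) ^ α ≤ Zfun α lam := by
  unfold Zfun
  cases k with
  | zero => simpa using tsum_nonneg fun j ↦ by positivity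
  | succ j =>
    have := (summable_Zfun_terms hα hlam).le_tsum j fun _ _ ↦ by positivity
    linarith

lemma zero_lt_Zfun {α lam : ℝ} (hα : 1 ≤ α) (hlam : 0 ≤ lam) : 0 < Zfun α lam := by
  have h := pow_div_factorial_rpow_le_Zfun hα hlam 0
  simp only [pow_zero, Nat.factorial_zero, Nat.cast_one, Real.one_rpow, div_one] at h
  linarith

lemma pow_div_factorial_rpow {x : ℝ} (hx : 0 ≤ x) (α : ℝ) (k : ℕ) :
    (x ^ k / (k ! : ℝ)) ^ α = (x ^ α) ^ k / (k ! : ℝ) ^ α := by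
  rw [Real.div_rpow (by positivity) (by positivity), ← Real.rpow_natCast,
    ← Real.rpow_mul hx, mul_comm, Real.rpow_mul hx, Real.rpow_natCast]

lemma tsum_subtype_le_eq_tsum_add {M : Type*} [AddCommMonoid M] [TopologicalSpace M]
    (f : ℕ → M) (n : ℕ) : ∑' k : {k // n ≤ k}, f k = ∑' i, f (n + i) :=
  (Equiv.tsum_eq
    { toFun := fun i ↦ ⟨n + i, Nat.le_add_right n i⟩
      invFun := fun k ↦ k.1 - n
      left_inv := fun i ↦ by simp
      right_inv := fun k ↦ Subtype.ext (Nat.add_sub_cancel' k.2) }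
    (fun k : {k // n ≤ k} ↦ f k)).symm

lemma div_succ_le_two_thirds_of_two_mul_floor_le {x : ℝ} (hx : 1 ≤ x) {k : ℕ}
    (hk : 2 * ⌊x⌋₊ ≤ k) : x / (k + 1) ≤ 2 / 3 := by
  have hM : (1 : ℝ) ≤ ⌊x⌋₊ := mod_cast Nat.le_floor (by exact_mod_cast hx)
  have hxM : x < ⌊x⌋₊ + 1 := Nat.lt_floor_add_one x
  have hkM : (2 * ⌊x⌋₊ : ℝ) ≤ k := mod_cast hk
  rw [div_le_iff₀ (by positivity)]
  linarith

lemma pow_div_factorial_four_mul_floor_le {x : ℝ} (hx : 1 ≤ x) (i : ℕ) :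
    x ^ (4 * ⌊x⌋₊ + i) / (4 * ⌊x⌋₊ + i)!
      ≤ ((2 : ℝ) ^ ⌊x⌋₊)⁻¹ * (2 / 3) ^ i * (x ^ (2 * ⌊x⌋₊) / (2 * ⌊x⌋₊)!) := by
  set M := ⌊x⌋₊
  have h := pow_div_factorial_le_geometric (by positivity) (by norm_num)
    (fun _ ↦ div_succ_le_two_thirds_of_two_mul_floor_le hx) (2 * M + i)
  rw [show 2 * M + (2 * M + i) = 4 * M + i by ring] at h
  calc _ ≤ (2 / 3 : ℝ) ^ (2 * M + i) * (x ^ (2 * M) / (2 * M)!) := h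
    _ = (4 / 9 : ℝ) ^ M * (2 / 3) ^ i * (x ^ (2 * M) / (2 * M)!) := by
      rw [pow_add, pow_mul]
      norm_num
    _ ≤ ((2 : ℝ) ^ M)⁻¹ * (2 / 3) ^ i * (x ^ (2 * M) / (2 * M)!) := by
      rw [← inv_pow]
      gcongr
      norm_num

lemma statPi_le_of_le_floor {α x : ℝ} (hα : 1 ≤ α) (hx : 1 ≤ x) (i : ℕ) :
    statPi α (x ^ α) (4 * ⌊x⌋₊ + i)
      ≤ (2 : ℝ) ^ (-(α * ⌊x⌋₊)) * (2 / 3) ^ i := by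
  set M := ⌊x⌋₊
  have hx₀ : 0 ≤ x := zero_le_one.trans hx
  set b : ℕ → ℝ := fun k ↦ x ^ k / (k ! : ℝ)
  have hb2M : 0 < b (2 * M) := by positivity
  have hdecay : b (4 * M + i) / b (2 * M) ≤ ((2 : ℝ) ^ M)⁻¹ * (2 / 3) ^ i :=
    (div_le_iff₀ hb2M).2 (pow_div_factorial_four_mul_floor_le hx i)
  have hZ : b (2 * M) ^ α ≤ Zfun α (x ^ α) := by
    rw [pow_div_factorial_rpow hx₀]
    exact pow_div_factorial_rpow_le_Zfun hα (by positivity) (2 * M)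
  calc statPi α (x ^ α) (4 * M + i) = b (4 * M + i) ^ α / Zfun α (x ^ α) := by
        rw [statPi, pow_div_factorial_rpow hx₀]
    _ ≤ b (4 * M + i) ^ α / b (2 * M) ^ α := by gcongr
    _ = (b (4 * M + i) / b (2 * M)) ^ α := (Real.div_rpow (by positivity) hb2M.le α).symm
    _ ≤ (((2 : ℝ) ^ M)⁻¹ * (2 / 3) ^ i) ^ α := by gcongr
    _ = (2 : ℝ) ^ (-(α * M)) * ((2 / 3 : ℝ) ^ i) ^ α := by
        rw [Real.mul_rpow (by positivity) (by positivity), Real.inv_rpow (by positivity),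
          ← Real.rpow_natCast, ← Real.rpow_mul zero_le_two, Real.rpow_neg zero_le_two,
          mul_comm (M : ℝ), mul_comm]
    _ ≤ (2 : ℝ) ^ (-(α * M)) * (2 / 3) ^ i := by
        gcongr
        exact Real.rpow_le_self_of_le_one (by positivity)
          (pow_le_one₀ (by norm_num) (by norm_num)) hα

lemma tsum_statPi_tail_le {α x : ℝ} (hα : 1 ≤ α) (hx : 1 ≤ x) :
    ∑' k : {k // 4 * ⌊x⌋₊ ≤ k}, statPi α (x ^ α) k ≤ 3 * (2 : ℝ) ^ (-(α * ⌊x⌋₊)) := by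
  have hbound := statPi_le_of_le_floor hα hx
  have hgeom := (hasSum_geometric_of_lt_one (r := (2 / 3 : ℝ)) (by norm_num)
    (by norm_num)).mul_left ((2 : ℝ) ^ (-(α * ⌊x⌋₊)))
  have hnonneg (k : ℕ) : 0 ≤ statPi α (x ^ α) k :=
    div_nonneg (by positivity) (zero_lt_Zfun hα (by positivity)).le
  rw [tsum_subtype_le_eq_tsum_add]
  calc ∑' i, statPi α (x ^ α) (4 * ⌊x⌋₊ + i)
      ≤ ∑' i : ℕ, (2 : ℝ) ^ (-(α * ⌊x⌋₊)) * (2 / 3) ^ i :=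
        (hgeom.summable.of_nonneg_of_le (fun i ↦ hnonneg _) hbound).tsum_le_tsum hbound
          hgeom.summable
    _ = 3 * (2 : ℝ) ^ (-(α * ⌊x⌋₊)) := by
        rw [hgeom.tsum_eq]
        norm_num [mul_comm]

theorem stationary_distribution_tail_estimate
    (α θ γ : ℝ) (hα : 1 ≤ α) (hθ : 0 < θ) (hγ : 0 < γ) :
    ∃ C > (0 : ℝ), ∃ ε₀ > (0 : ℝ), ∀ ε : ℝ, 0 < ε → ε ≤ ε₀ →
      (∑' k : {k : ℕ // 4 * ⌊(θ / γ) ^ (1 / α) / ε⌋₊ ≤ k},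
          statPi α (θ / (γ * ε ^ α)) k)
        ≤ C * (2 : ℝ) ^ (-(α * (⌊(θ / γ) ^ (1 / α) / ε⌋₊ : ℝ))) := by
  have hc : 0 < (θ / γ) ^ (1 / α) := by positivity
  refine ⟨3, by norm_num, (θ / γ) ^ (1 / α), hc, fun ε hε hεc ↦ ?_⟩
  have hlam : θ / (γ * ε ^ α) = ((θ / γ) ^ (1 / α) / ε) ^ α := by
    rw [Real.div_rpow hc.le hε.le, ← Real.rpow_mul (by positivity),
      one_div_mul_cancel (by linarith), Real.rpow_one, div_div]
  rw [hlam]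
  exact tsum_statPi_tail_le hα ((one_le_div hε).2 hεc)
end

section
/- Let α ≥ 1 be real and θ, γ > 0. For ε > 0 set λ_ε = θ/(γ·ε^α). Then for every δ > 0: lim_{ε→0⁺} ∑_{k ∈ ℕ : |εk − (θ/γ)^{1/α}| > δ} π_{λ_ε}(k) = 0. -/
open scoped BigOperators

/-!
Put `m = (θ/γ)^(1/α)` and `μ = m/ε`. Then `λ_ε = μ^α`, so `π_λ(k)` is proportional to
`w k = (μ^k/k!)^α`, a power of the Poisson(`μ`) weights, and `|εk - m| > δ` says
`|k - μ| > (δ/m) μ`. Since `α ≥ 1` and `μ^k/k! ≤ e^μ`, we get `∑ w ≤ e^{αμ}`. Applied to the tilted weights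
`w k · e^{±αsk}`, this gives the Chernoff bound `e^{αμ(1-s²)}` for each tail. Stirling's upper
bound on `k!` shows that the mode term `w ⌊μ⌋` is at least `(e^{μ-2}/√μ)^α`, so the deviation
probability is `O((√μ e^{-s²μ})^α)`, which tends to `0` as `μ → ∞`.
-/

open Real Filter Set Topology
open scoped Nat

section PoissonWeights

variable {α μ : ℝ}

lemma tsum_pow_div_factorial (x : ℝ) : ∑' k : ℕ, x ^ k / k ! = exp x := by
  rw [exp_eq_exp_ℝ]
  exact (NormedSpace.expSeries_div_hasSum_exp x).tsum_eq

lemma rpow_pow_div_factorial_le (hμ : 0 ≤ μ) (hα : 1 ≤ α) (k : ℕ) :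
    (μ ^ k / k !) ^ α ≤ exp (μ * (α - 1)) * (μ ^ k / k !) :=
  calc (μ ^ k / k !) ^ α = (μ ^ k / k !) ^ (α - 1) * (μ ^ k / k !) := by
        rw [← rpow_add_one' (by positivity) (by linarith), sub_add_cancel]
    _ ≤ exp μ ^ (α - 1) * (μ ^ k / k !) := by
        gcongr
        exact pow_div_factorial_le_exp _ hμ k
    _ = exp (μ * (α - 1)) * (μ ^ k / k !) := by rw [exp_mul]

lemma summable_rpow_pow_div_factorial (hμ : 0 ≤ μ) (hα : 1 ≤ α) :
    Summable fun k : ℕ => (μ ^ k / k !) ^ α :=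
  .of_nonneg_of_le (fun k => by positivity) (rpow_pow_div_factorial_le hμ hα)
    ((summable_pow_div_factorial μ).mul_left _)

lemma tsum_rpow_pow_div_factorial_le (hμ : 0 ≤ μ) (hα : 1 ≤ α) :
    ∑' k : ℕ, (μ ^ k / k !) ^ α ≤ exp (α * μ) :=
  calc ∑' k : ℕ, (μ ^ k / k !) ^ α ≤ ∑' k : ℕ, exp (μ * (α - 1)) * (μ ^ k / k !) :=
        (summable_rpow_pow_div_factorial hμ hα).tsum_le_tsum (rpow_pow_div_factorial_le hμ hα)
          ((summable_pow_div_factorial μ).mul_left _)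
    _ = exp (α * μ) := by
        rw [tsum_mul_left, tsum_pow_div_factorial, ← exp_add]
        ring_nf

lemma rpow_pow_div_factorial_mul_exp (hμ : 0 ≤ μ) (s t : ℝ) (k : ℕ) :
    (μ ^ k / k !) ^ α * exp (α * s * (k - t)) =
      exp (-(α * s * t)) * ((μ * exp s) ^ k / k !) ^ α := by
  rw [mul_pow, mul_div_right_comm, mul_rpow (by positivity) (by positivity), ← exp_nat_mul,
    ← exp_mul, mul_left_comm, ← exp_add]
  ring_nf

lemma summable_rpow_pow_div_factorial_mul_exp (hμ : 0 ≤ μ) (hα : 1 ≤ α) (s t : ℝ) :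
    Summable fun k : ℕ => (μ ^ k / k !) ^ α * exp (α * s * (k - t)) := by
  simp_rw [rpow_pow_div_factorial_mul_exp hμ]
  exact (summable_rpow_pow_div_factorial (by positivity) hα).mul_left _

lemma tsum_rpow_pow_div_factorial_mul_exp_le (hμ : 0 ≤ μ) (hα : 1 ≤ α) (s t : ℝ) :
    ∑' k : ℕ, (μ ^ k / k !) ^ α * exp (α * s * (k - t)) ≤ exp (α * (μ * exp s - s * t)) := by
  simp_rw [rpow_pow_div_factorial_mul_exp hμ, tsum_mul_left]
  calc exp (-(α * s * t)) * ∑' k : ℕ, ((μ * exp s) ^ k / k !) ^ α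
      ≤ exp (-(α * s * t)) * exp (α * (μ * exp s)) := by
        gcongr
        exact tsum_rpow_pow_div_factorial_le (by positivity) hα
    _ = exp (α * (μ * exp s - s * t)) := by rw [← exp_add]; ring_nf

lemma mul_exp_sub_le_mul_one_sub_sq (hμ : 0 ≤ μ) {s : ℝ} (hs : |s| ≤ 1) :
    μ * exp s - s * (μ * (1 + 2 * s)) ≤ μ * (1 - s ^ 2) := by
  have := (abs_le.mp (abs_exp_sub_one_sub_id_le hs)).2
  nlinarith

lemma tsum_rpow_pow_div_factorial_deviation_le (hμ : 0 ≤ μ) (hα : 1 ≤ α) {s : ℝ} (hs0 : 0 ≤ s)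
    (hs1 : s ≤ 1) (S : Set ℕ) (hS : ∀ k ∈ S, 2 * s * μ < |(k : ℝ) - μ|) :
    ∑' k : S, (μ ^ (k : ℕ) / (k : ℕ) !) ^ α ≤ 2 * exp (α * (μ * (1 - s ^ 2))) := by
  have hs : |s| ≤ 1 := abs_le.mpr ⟨by linarith, hs1⟩
  -- tilting by `s` dominates the upper tail `k > μ(1+2s)`, tilting by `-s` the lower one
  set f : ℕ → ℝ := fun k => (μ ^ k / k !) ^ α * exp (α * s * (k - μ * (1 + 2 * s)))
  set g : ℕ → ℝ := fun k => (μ ^ k / k !) ^ α * exp (α * -s * (k - μ * (1 + 2 * -s)))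
  have hf : ∑' k, f k ≤ exp (α * (μ * (1 - s ^ 2))) :=
    (tsum_rpow_pow_div_factorial_mul_exp_le hμ hα _ _).trans
      (exp_le_exp.mpr
        (mul_le_mul_of_nonneg_left (mul_exp_sub_le_mul_one_sub_sq hμ hs) (by linarith)))
  have hg : ∑' k, g k ≤ exp (α * (μ * (1 - s ^ 2))) := by
    have := mul_exp_sub_le_mul_one_sub_sq hμ (s := -s) (by rwa [abs_neg])
    rw [neg_sq] at this
    exact (tsum_rpow_pow_div_factorial_mul_exp_le hμ hα _ _).trans
      (exp_le_exp.mpr (mul_le_mul_of_nonneg_left this (by linarith)))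
  have hpoint : ∀ k, S.indicator (fun k => (μ ^ k / k !) ^ α) k ≤ f k + g k := by
    intro k
    have hw : 0 ≤ (μ ^ k / k !) ^ α := by positivity
    by_cases hk : k ∈ S
    · rw [indicator_of_mem hk]
      rcases lt_abs.mp (hS k hk) with hup | hlow
      · have : 1 ≤ exp (α * s * (k - μ * (1 + 2 * s))) :=
          one_le_exp (mul_nonneg (by positivity) (by linarith))
        nlinarith [(by positivity : 0 ≤ g k)]
      · have : 1 ≤ exp (α * -s * (k - μ * (1 + 2 * -s))) :=
          one_le_exp (mul_nonneg_of_nonpos_of_nonpos (by nlinarith) (by linarith))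
        nlinarith [(by positivity : 0 ≤ f k)]
    · rw [indicator_of_notMem hk]
      positivity
  calc ∑' k : S, (μ ^ (k : ℕ) / (k : ℕ) !) ^ α = ∑' k, S.indicator (fun k => (μ ^ k / k !) ^ α) k :=
        tsum_subtype S (fun k : ℕ => (μ ^ k / k !) ^ α)
    _ ≤ ∑' k, (f k + g k) :=
        ((summable_rpow_pow_div_factorial hμ hα).indicator S).tsum_le_tsum hpoint
          ((summable_rpow_pow_div_factorial_mul_exp hμ hα _ _).add
            (summable_rpow_pow_div_factorial_mul_exp hμ hα _ _))
    _ ≤ 2 * exp (α * (μ * (1 - s ^ 2))) := by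
        rw [(summable_rpow_pow_div_factorial_mul_exp hμ hα _ _).tsum_add
          (summable_rpow_pow_div_factorial_mul_exp hμ hα _ _)]
        linarith

lemma factorial_le_exp_one_mul_sqrt_mul_pow {n : ℕ} (hn : n ≠ 0) :
    (n ! : ℝ) ≤ exp 1 * √n * (n / exp 1) ^ n := by
  obtain ⟨m, rfl⟩ := Nat.exists_eq_succ_of_ne_zero hn
  have hseq : Stirling.stirlingSeq (m + 1) ≤ exp 1 / √2 := by
    rw [← Stirling.stirlingSeq_one]
    exact Stirling.stirlingSeq'_antitone (Nat.zero_le m)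
  rw [Stirling.stirlingSeq, div_le_iff₀ (by positivity)] at hseq
  calc ((m + 1) ! : ℝ) ≤ exp 1 / √2 * (√(2 * (m + 1 : ℕ)) * ((m + 1 : ℕ) / exp 1) ^ (m + 1)) := hseq
    _ = exp 1 * √(m + 1 : ℕ) * ((m + 1 : ℕ) / exp 1) ^ (m + 1) := by
        rw [sqrt_mul zero_le_two]
        field_simp

lemma exp_sub_two_div_sqrt_le_pow_floor_div_factorial (hμ : 1 ≤ μ) :
    exp (μ - 2) / √μ ≤ μ ^ ⌊μ⌋₊ / ⌊μ⌋₊ ! := by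
  set n := ⌊μ⌋₊
  have hn : n ≠ 0 := (Nat.floor_pos.mpr hμ).ne'
  have hnμ : (n : ℝ) ≤ μ := Nat.floor_le (by linarith)
  have hμn : μ < n + 1 := Nat.lt_floor_add_one μ
  have hfac : (n ! : ℝ) ≤ exp 1 * √μ * μ ^ n / exp n := by
    calc (n ! : ℝ) ≤ exp 1 * √n * (n / exp 1) ^ n := factorial_le_exp_one_mul_sqrt_mul_pow hn
      _ = exp 1 * √n * n ^ n / exp n := by rw [div_pow, ← exp_nat_mul, mul_one]; ring
      _ ≤ exp 1 * √μ * μ ^ n / exp n := by gcongr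
  rw [div_le_div_iff₀ (by positivity) (by positivity)]
  calc exp (μ - 2) * n ! ≤ exp (μ - 2) * (exp 1 * √μ * μ ^ n / exp n) := by gcongr
    _ = μ ^ n * √μ * (exp (μ - 2) * exp 1 / exp n) := by ring
    _ ≤ μ ^ n * √μ * 1 := by
        gcongr
        rw [← exp_add, ← exp_sub, exp_le_one_iff]
        linarith
    _ = μ ^ n * √μ := mul_one _

end PoissonWeights

section StationaryDistribution

variable {α μ : ℝ}

lemma rpow_pow_div_rpow_factorial (hμ : 0 ≤ μ) (k : ℕ) :
    (μ ^ α) ^ k / (k ! : ℝ) ^ α = (μ ^ k / k !) ^ α := by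
  rw [div_rpow (by positivity) (by positivity), ← rpow_mul_natCast hμ, ← rpow_natCast_mul hμ,
    mul_comm]

lemma Zfun_rpow (hμ : 0 ≤ μ) (hα : 1 ≤ α) :
    Zfun α (μ ^ α) = ∑' k : ℕ, (μ ^ k / k !) ^ α := by
  rw [(summable_rpow_pow_div_factorial hμ hα).tsum_eq_zero_add, Zfun]
  simp [rpow_pow_div_rpow_factorial hμ]

lemma statPi_rpow (hμ : 0 ≤ μ) (hα : 1 ≤ α) (k : ℕ) :
    statPi α (μ ^ α) k = (μ ^ k / k !) ^ α / ∑' j : ℕ, (μ ^ j / j !) ^ α := by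
  rw [statPi, Zfun_rpow hμ hα, rpow_pow_div_rpow_factorial hμ]

lemma le_tsum_rpow_pow_div_factorial (hμ : 1 ≤ μ) (hα : 1 ≤ α) :
    (exp (μ - 2) / √μ) ^ α ≤ ∑' k : ℕ, (μ ^ k / k !) ^ α :=
  (rpow_le_rpow (by positivity) (exp_sub_two_div_sqrt_le_pow_floor_div_factorial hμ)
    (by linarith)).trans
    ((summable_rpow_pow_div_factorial (by linarith) hα).le_tsum _ fun k _ => by positivity)

lemma tsum_statPi_deviation_le (hμ : 1 ≤ μ) (hα : 1 ≤ α) {s : ℝ} (hs0 : 0 ≤ s) (hs1 : s ≤ 1)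
    (S : Set ℕ) (hS : ∀ k ∈ S, 2 * s * μ < |(k : ℝ) - μ|) :
    ∑' k : S, statPi α (μ ^ α) k ≤ 2 * (exp 2 * √μ * exp (-s ^ 2 * μ)) ^ α := by
  simp_rw [statPi_rpow (by linarith : 0 ≤ μ) hα, tsum_div_const]
  calc (∑' k : S, (μ ^ (k : ℕ) / (k : ℕ) !) ^ α) / ∑' j : ℕ, (μ ^ j / j !) ^ α
      ≤ 2 * exp (α * (μ * (1 - s ^ 2))) / (exp (μ - 2) / √μ) ^ α :=
        div_le_div₀ (by positivity)
          (tsum_rpow_pow_div_factorial_deviation_le (by linarith) hα hs0 hs1 S hS)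
          (by positivity) (le_tsum_rpow_pow_div_factorial hμ hα)
    _ = 2 * (exp 2 * √μ * exp (-s ^ 2 * μ)) ^ α := by
        have hsplit : exp (α * (μ * (1 - s ^ 2))) =
            exp ((μ - 2) * α) * exp (2 * α) * exp (-s ^ 2 * μ * α) := by
          rw [← exp_add, ← exp_add]
          ring_nf
        rw [div_rpow (by positivity) (by positivity), mul_rpow (by positivity) (by positivity),
          mul_rpow (by positivity) (by positivity), ← exp_mul, ← exp_mul, ← exp_mul, hsplit]
        field_simp

lemma tendsto_tsum_statPi_deviation (hα : 1 ≤ α) {β : ℝ} (hβ : 0 < β) :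
    Tendsto (fun μ : ℝ => ∑' k : {k : ℕ // β * μ < |(k : ℝ) - μ|}, statPi α (μ ^ α) k)
      atTop (𝓝 0) := by
  set s := min (β / 2) 1
  have hs : 0 < s := lt_min (by linarith) one_pos
  have hbound : Tendsto (fun μ : ℝ => 2 * (exp 2 * √μ * exp (-s ^ 2 * μ)) ^ α) atTop (𝓝 0) := by
    have := (((tendsto_rpow_mul_exp_neg_mul_atTop_nhds_zero (1 / 2) (s ^ 2)
      (by positivity)).const_mul (exp 2)).rpow_const (Or.inr (by linarith : 0 ≤ α))).const_mul 2
    rw [mul_zero, zero_rpow (by linarith), mul_zero] at this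
    refine this.congr' ?_
    filter_upwards [eventually_ge_atTop 0] with μ hμ
    rw [sqrt_eq_rpow, mul_assoc]
  refine squeeze_zero' ?_ ?_ hbound
  · filter_upwards [eventually_ge_atTop 0] with μ hμ
    refine tsum_nonneg fun k => ?_
    rw [statPi_rpow hμ hα]
    exact div_nonneg (by positivity) (tsum_nonneg fun j => by positivity)
  · filter_upwards [eventually_ge_atTop 1] with μ hμ
    refine tsum_statPi_deviation_le hμ hα hs.le (min_le_right _ _) {k | β * μ < |(k : ℝ) - μ|}
      fun k hk => lt_of_le_of_lt ?_ hk
    have : 2 * s ≤ β := by linarith [min_le_left (β / 2) 1]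
    nlinarith

end StationaryDistribution

theorem stationary_distribution_concentration
    (α θ γ : ℝ) (hα : 1 ≤ α) (hθ : 0 < θ) (hγ : 0 < γ) (δ : ℝ) (hδ : 0 < δ) :
    Filter.Tendsto
      (fun ε : ℝ =>
        ∑' k : {k : ℕ // δ < |ε * (k : ℝ) - (θ / γ) ^ (1 / α)|},
          statPi α (θ / (γ * ε ^ α)) k)
      (nhdsWithin 0 (Set.Ioi 0)) (nhds 0) := by
  set m := (θ / γ) ^ (1 / α) with hm_def
  have hm : 0 < m := rpow_pos_of_pos (div_pos hθ hγ) _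
  have hscale : Tendsto (fun ε : ℝ => m / ε) (𝓝[>] 0) atTop := by
    simpa [div_eq_mul_inv] using tendsto_inv_nhdsGT_zero.const_mul_atTop hm
  refine ((tendsto_tsum_statPi_deviation hα (div_pos hδ hm)).comp hscale).congr' ?_
  filter_upwards [self_mem_nhdsWithin] with ε (hε : 0 < ε)
  have hlam : (m / ε) ^ α = θ / (γ * ε ^ α) := by
    rw [div_rpow hm.le hε.le, hm_def, one_div, rpow_inv_rpow (div_pos hθ hγ).le (by linarith),
      div_div]
  have hdev : (fun k : ℕ => δ / m * (m / ε) < |(k : ℝ) - m / ε|) =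
      fun k : ℕ => δ < |ε * k - m| := by
    ext k
    rw [div_mul_div_cancel₀ hm.ne', div_lt_iff₀ hε, ← abs_of_pos hε, ← abs_mul, abs_of_pos hε,
      sub_mul, div_mul_cancel₀ _ hε.ne', mul_comm]
  simp only [Function.comp_apply, hlam]
  rw [hdev]
end

section
/- Let α ≥ 1 be real and θ, γ > 0. For ε > 0 set λ_ε = θ/(γ·ε^α). Then for every bounded continuous function f : ℝ → ℝ: lim_{ε→0⁺} ∑_{k=0}^∞ π_{λ_ε}(k)·f(εk) = f((θ/γ)^{1/α}). -/
open scoped BigOperators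

/-! With `λ = c ^ α` the weights satisfy `π_λ(k + 1) = (c / (k + 1)) ^ α · π_λ(k)`, and for
`λ = λ_ε` one has `c = x₀ / ε` with `x₀ = (θ / γ) ^ (1 / α)`. Hence the weights shrink by a
fixed factor `q < 1` per step once `ε k ≥ x₀ + δ / 2`, and grow by a factor `1 / q' > 1` per step
while `ε k ≤ x₀ - δ / 2`. Shifting the index by `s = ⌊δ / (2 ε)⌋` therefore bounds the mass of
`{k | δ ≤ |ε k - x₀|}` by `q ^ s + q' ^ s`, which tends to `0` as `ε → 0⁺`; a bounded function
continuous at `x₀` then has `π`-average tending to `f x₀`. -/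

open Filter Topology

lemma tsum_indicator_le_mul_of_le_comp {ι : Type*} {p : ι → ℝ} (hp : 0 ≤ p) (hps : Summable p)
    {S : Set ι} {e : ι → ι} (he : S.InjOn e) {r : ℝ} (hr : 0 ≤ r)
    (h : ∀ k ∈ S, p k ≤ r * p (e k)) : ∑' k, S.indicator p k ≤ r * ∑' k, p k :=
  calc ∑' k, S.indicator p k = ∑' k : S, p k := (tsum_subtype S p).symm
    _ ≤ ∑' k : S, r * p (e k) :=
      (hps.subtype S).tsum_le_tsum (fun k => h k k.2)
        ((hps.comp_injective he.injective).mul_left r)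
    _ = r * ∑' k : S, p (e k) := tsum_mul_left
    _ ≤ r * ∑' k, p k := by
      gcongr
      exact tsum_comp_le_tsum_of_inj hps hp he.injective

lemma tsum_indicator_le_add_of_subset_union {ι : Type*} {p : ι → ℝ} (hp : 0 ≤ p)
    (hps : Summable p) {S A B : Set ι} (h : S ⊆ A ∪ B) :
    ∑' k, S.indicator p k ≤ ∑' k, A.indicator p k + ∑' k, B.indicator p k := by
  rw [← (hps.indicator A).tsum_add (hps.indicator B)]
  refine (hps.indicator S).tsum_le_tsum (fun k => ?_) ((hps.indicator A).add (hps.indicator B))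
  calc S.indicator p k ≤ (A ∪ B).indicator p k := Set.indicator_le_indicator_of_subset h hp k
    _ ≤ (A ∪ B).indicator p k + (A ∩ B).indicator p k :=
      le_add_of_nonneg_right (Set.indicator_nonneg (fun k _ => hp k) k)
    _ = A.indicator p k + B.indicator p k := congrFun (Set.indicator_union_add_inter p A B) k

lemma tendsto_nat_floor_div_nhdsGT_zero {δ : ℝ} (hδ : 0 < δ) :
    Tendsto (fun ε : ℝ => ⌊δ / ε⌋₊) (𝓝[>] 0) atTop :=
  tendsto_nat_floor_atTop.comp <|
    (tendsto_inv_nhdsGT_zero.const_mul_atTop hδ).congr fun ε => (div_eq_mul_inv δ ε).symm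

lemma tendsto_tsum_mul_of_concentration {ι κ : Type*} {l : Filter ι} {p y : ι → κ → ℝ}
    {x₀ : ℝ} {f : ℝ → ℝ} (hp : ∀ᶠ i in l, 0 ≤ p i ∧ HasSum (p i) 1)
    (hconc : ∀ᶠ δ in 𝓝[>] 0,
      Tendsto (fun i => ∑' k, {k | δ ≤ |y i k - x₀|}.indicator (p i) k) l (𝓝 0))
    (hf : ContinuousAt f x₀) (hbd : ∃ M, ∀ x, |f x| ≤ M) :
    Tendsto (fun i => ∑' k, p i k * f (y i k)) l (𝓝 (f x₀)) := by
  obtain ⟨M, hM⟩ := hbd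
  have hM0 : 0 ≤ M := (abs_nonneg _).trans (hM 0)
  rw [Metric.tendsto_nhds]
  intro η hη
  obtain ⟨δ₀, hδ₀, hclose⟩ := Metric.continuousAt_iff.mp hf (η / 2) (half_pos hη)
  obtain ⟨δ, hδ, hδpos, hδlt⟩ := (hconc.and (Ioo_mem_nhdsGT hδ₀)).exists
  filter_upwards [hp, Metric.tendsto_nhds.mp hδ (η / (2 * (2 * M + 1))) (by positivity)]
    with i ⟨hp0, hp1⟩ hmass
  set F := {k | δ ≤ |y i k - x₀|}
  have hF0 : 0 ≤ ∑' k, F.indicator (p i) k :=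
    tsum_nonneg fun k => Set.indicator_nonneg (fun k _ => hp0 k) k
  rw [Real.dist_eq, sub_zero, abs_of_nonneg hF0] at hmass
  have hsum : HasSum (fun k => p i k * f (y i k)) (∑' k, p i k * f (y i k)) :=
    (Summable.of_norm_bounded (hp1.summable.mul_left M) fun k => by
      rw [Real.norm_eq_abs, abs_mul, abs_of_nonneg (hp0 k), mul_comm]
      exact mul_le_mul_of_nonneg_right (hM _) (hp0 k)).hasSum
  have hterm : ∀ k, ‖p i k * f (y i k) - p i k * f x₀‖ ≤
      η / 2 * p i k + 2 * M * F.indicator (p i) k := fun k => by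
    have hpk : 0 ≤ p i k := hp0 k
    rw [← mul_sub, Real.norm_eq_abs, abs_mul, abs_of_nonneg hpk]
    by_cases hk : k ∈ F
    · have : |f (y i k) - f x₀| ≤ 2 * M := (abs_sub _ _).trans (by linarith [hM (y i k), hM x₀])
      rw [Set.indicator_of_mem hk]
      nlinarith
    · have : |f (y i k) - f x₀| < η / 2 :=
        hclose ((Real.dist_eq _ _).trans_lt ((not_le.mp hk).trans hδlt))
      rw [Set.indicator_of_notMem hk]
      nlinarith
  have hbound := (hsum.sub (hp1.mul_right (f x₀))).norm_le_of_bounded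
    ((hp1.mul_left (η / 2)).add ((hp1.summable.indicator F).hasSum.mul_left (2 * M))) hterm
  rw [one_mul, mul_one, Real.norm_eq_abs] at hbound
  rw [Real.dist_eq]
  calc _ ≤ η / 2 + 2 * M * ∑' k, F.indicator (p i) k := hbound
    _ < η / 2 + (2 * M + 1) * (η / (2 * (2 * M + 1))) := by nlinarith
    _ = η := by field_simp; ring

section
variable {α : ℝ}

lemma one_le_Zfun {lam : ℝ} (hlam : 0 ≤ lam) : 1 ≤ Zfun α lam :=
  le_add_of_nonneg_right (tsum_nonneg fun j => by positivity)

lemma hasSum_pow_div_factorial_rpow (hα : 1 ≤ α) {lam : ℝ} (hlam : 0 ≤ lam) :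
    HasSum (fun k : ℕ => lam ^ k / (k.factorial : ℝ) ^ α) (Zfun α lam) := by
  have hsum : Summable (fun k : ℕ => lam ^ k / (k.factorial : ℝ) ^ α) :=
    (Real.summable_pow_div_factorial lam).of_nonneg_of_le (fun k => by positivity) fun k =>
      div_le_div_of_nonneg_left (by positivity) (by positivity)
        (Real.self_le_rpow_of_one_le (by exact_mod_cast k.factorial_pos) hα)
  convert hsum.hasSum using 1
  rw [Zfun, hsum.tsum_eq_zero_add]
  simp

lemma hasSum_statPi (hα : 1 ≤ α) {lam : ℝ} (hlam : 0 ≤ lam) : HasSum (statPi α lam) 1 := by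
  have h := (hasSum_pow_div_factorial_rpow hα hlam).div_const (Zfun α lam)
  rwa [div_self (zero_lt_one.trans_le (one_le_Zfun hlam)).ne'] at h

lemma statPi_nonneg {lam : ℝ} (hlam : 0 ≤ lam) : 0 ≤ statPi α lam := fun k => by
  have := one_le_Zfun (α := α) hlam
  unfold statPi
  positivity

lemma statPi_rpow_succ {c : ℝ} (hc : 0 ≤ c) (k : ℕ) :
    statPi α (c ^ α) (k + 1) = (c / (k + 1)) ^ α * statPi α (c ^ α) k := by
  unfold statPi
  rw [Nat.factorial_succ, Nat.cast_mul, Real.mul_rpow (by positivity) (by positivity),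
    Real.div_rpow hc (by positivity), pow_succ]
  push_cast
  have : (0 : ℝ) < ((k : ℝ) + 1) ^ α := by positivity
  have : (0 : ℝ) < (k.factorial : ℝ) ^ α := by positivity
  field_simp

lemma statPi_rpow_succ_le (hα : 0 ≤ α) {c t : ℝ} (hc : 0 ≤ c) {k : ℕ} (h : c ≤ t * (k + 1)) :
    statPi α (c ^ α) (k + 1) ≤ t ^ α * statPi α (c ^ α) k := by
  rw [statPi_rpow_succ hc]
  have := statPi_nonneg (α := α) (Real.rpow_nonneg hc α) k
  gcongr
  rwa [div_le_iff₀ (by positivity)]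

lemma statPi_rpow_le_succ (hα : 0 ≤ α) {c t : ℝ} (hc : 0 < c) {k : ℕ} (h : k + 1 ≤ t * c) :
    statPi α (c ^ α) k ≤ t ^ α * statPi α (c ^ α) (k + 1) := by
  have ht : 0 ≤ t := nonneg_of_mul_nonneg_left ((k.cast_add_one_pos).le.trans h) hc
  have hratio : 1 ≤ t * (c / (k + 1)) := by
    rw [mul_div_assoc', le_div_iff₀ (by positivity)]
    linarith
  rw [statPi_rpow_succ hc.le, ← mul_assoc,
    ← Real.mul_rpow ht (div_nonneg hc.le k.cast_add_one_pos.le)]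
  exact le_mul_of_one_le_left (statPi_nonneg (Real.rpow_nonneg hc.le α) k)
    (Real.one_le_rpow hratio hα)

lemma tsum_indicator_statPi_rpow_upperTail_le (hα : 1 ≤ α) {c a : ℝ} (hc : 0 ≤ c) (ha : 0 < a)
    (s : ℕ) :
    ∑' k, {k : ℕ | a + s ≤ k}.indicator (statPi α (c ^ α)) k ≤ ((c / a) ^ α) ^ s := by
  have hsk : ∀ k ∈ {k : ℕ | a + s ≤ k}, s ≤ k := fun k (hk : a + s ≤ (k : ℝ)) => by
    exact_mod_cast (show (s : ℝ) ≤ k by linarith)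
  have hp := hasSum_statPi hα (Real.rpow_nonneg hc α)
  refine (tsum_indicator_le_mul_of_le_comp (r := ((c / a) ^ α) ^ s) (e := (· - s))
    (statPi_nonneg (Real.rpow_nonneg hc α)) hp.summable
    (fun x hx y hy (hxy : x - s = y - s) => by have := hsk x hx; have := hsk y hy; omega)
    (by positivity) fun k hk => ?_).trans_eq (by rw [hp.tsum_eq, mul_one])
  obtain ⟨n, rfl⟩ := Nat.exists_eq_add_of_le (hsk k hk)
  have han : a ≤ n := by
    have : a + s ≤ ((s + n : ℕ) : ℝ) := hk
    push_cast at this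
    linarith
  have hstep : ∀ i < s, statPi α (c ^ α) (n + i + 1) ≤
      (c / a) ^ α * statPi α (c ^ α) (n + i) := fun i _ => by
    refine statPi_rpow_succ_le (by linarith) hc ?_
    rw [div_mul_eq_mul_div, le_div_iff₀ ha]
    gcongr
    push_cast
    linarith [i.cast_nonneg (α := ℝ)]
  simpa [add_comm s n] using
    le_geom (u := fun i => statPi α (c ^ α) (n + i)) (by positivity) s hstep

lemma tsum_indicator_statPi_rpow_lowerTail_le (hα : 1 ≤ α) {c b : ℝ} (hc : 0 < c) (hb : 0 ≤ b)
    (s : ℕ) :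
    ∑' k, {k : ℕ | k + s ≤ b}.indicator (statPi α (c ^ α)) k ≤ ((b / c) ^ α) ^ s := by
  have hp := hasSum_statPi hα (Real.rpow_nonneg hc.le α)
  refine (tsum_indicator_le_mul_of_le_comp (r := ((b / c) ^ α) ^ s) (e := (· + s))
    (statPi_nonneg (Real.rpow_nonneg hc.le α)) hp.summable (add_left_injective s).injOn
    (by positivity) fun k (hk : (k : ℝ) + s ≤ b) => ?_).trans_eq (by rw [hp.tsum_eq, mul_one])
  have hstep : ∀ i < s, statPi α (c ^ α) (k + (s - (i + 1))) ≤
      (b / c) ^ α * statPi α (c ^ α) (k + (s - i)) := fun i hi => by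
    have hsucc : k + (s - (i + 1)) + 1 = k + (s - i) := by omega
    rw [← hsucc]
    refine statPi_rpow_le_succ (by linarith) hc ?_
    rw [div_mul_cancel₀ b hc.ne']
    have : k + (s - (i + 1)) + 1 ≤ k + s := by omega
    exact le_trans (by exact_mod_cast this) hk
  simpa using le_geom (u := fun i => statPi α (c ^ α) (k + (s - i))) (by positivity) s hstep

lemma tsum_indicator_statPi_far_le (hα : 1 ≤ α) {x₀ δ ε : ℝ} (hx₀ : 0 < x₀)
    (hδ : 0 < δ) (hδx : δ ≤ 2 * x₀) (hε : 0 < ε) :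
    ∑' k, {k : ℕ | δ ≤ |ε * k - x₀|}.indicator (statPi α ((x₀ / ε) ^ α)) k ≤
      ((x₀ / (x₀ + δ / 2)) ^ α) ^ ⌊δ / 2 / ε⌋₊ + (((x₀ - δ / 2) / x₀) ^ α) ^ ⌊δ / 2 / ε⌋₊ := by
  have hc : 0 < x₀ / ε := div_pos hx₀ hε
  set s := ⌊δ / 2 / ε⌋₊
  have hs : ε * s ≤ δ / 2 := (le_div_iff₀' hε).mp (Nat.floor_le (by positivity))
  have hcover : {k : ℕ | δ ≤ |ε * k - x₀|} ⊆
      {k : ℕ | (x₀ + δ / 2) / ε + s ≤ k} ∪ {k : ℕ | k + s ≤ (x₀ - δ / 2) / ε} := by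
    intro k (hk : δ ≤ |ε * k - x₀|)
    rcases le_abs'.mp hk with h | h
    · right
      show (k : ℝ) + s ≤ (x₀ - δ / 2) / ε
      rw [le_div_iff₀ hε]
      linarith
    · left
      show (x₀ + δ / 2) / ε + s ≤ (k : ℝ)
      rw [div_add' _ _ _ hε.ne', div_le_iff₀ hε]
      linarith
  refine (tsum_indicator_le_add_of_subset_union (statPi_nonneg (Real.rpow_nonneg hc.le α))
    (hasSum_statPi hα (Real.rpow_nonneg hc.le α)).summable hcover).trans (add_le_add ?_ ?_)
  · refine (tsum_indicator_statPi_rpow_upperTail_le hα hc.le (a := (x₀ + δ / 2) / ε)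
      (by positivity) s).trans_eq ?_
    rw [div_div_div_cancel_right₀ hε.ne']
  · refine (tsum_indicator_statPi_rpow_lowerTail_le hα hc (b := (x₀ - δ / 2) / ε)
      (div_nonneg (by linarith) hε.le) s).trans_eq ?_
    rw [div_div_div_cancel_right₀ hε.ne']

lemma tendsto_tsum_indicator_statPi_far (hα : 1 ≤ α) {x₀ δ : ℝ} (hx₀ : 0 < x₀)
    (hδ : 0 < δ) (hδx : δ ≤ 2 * x₀) :
    Tendsto (fun ε : ℝ => ∑' k, {k : ℕ | δ ≤ |ε * k - x₀|}.indicator (statPi α ((x₀ / ε) ^ α)) k)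
      (𝓝[>] 0) (𝓝 0) := by
  have hα0 : 0 < α := zero_lt_one.trans_le hα
  set q := (x₀ / (x₀ + δ / 2)) ^ α
  set q' := ((x₀ - δ / 2) / x₀) ^ α
  have hq0 : 0 ≤ q := by positivity
  have hq : q < 1 :=
    Real.rpow_lt_one (by positivity) ((div_lt_one (by positivity)).2 (by linarith)) hα0
  have hq'0 : 0 ≤ q' := Real.rpow_nonneg (div_nonneg (by linarith) hx₀.le) α
  have hq' : q' < 1 :=
    Real.rpow_lt_one (div_nonneg (by linarith) hx₀.le) ((div_lt_one hx₀).2 (by linarith)) hα0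
  have hlim : Tendsto (fun ε : ℝ => q ^ ⌊δ / 2 / ε⌋₊ + q' ^ ⌊δ / 2 / ε⌋₊) (𝓝[>] 0) (𝓝 0) := by
    simpa only [add_zero, Function.comp_def] using
      ((tendsto_pow_atTop_nhds_zero_of_lt_one hq0 hq).add
        (tendsto_pow_atTop_nhds_zero_of_lt_one hq'0 hq')).comp
        (tendsto_nat_floor_div_nhdsGT_zero (half_pos hδ))
  have hpos : ∀ᶠ ε in 𝓝[>] (0 : ℝ), 0 < ε := self_mem_nhdsWithin
  exact tendsto_of_tendsto_of_tendsto_of_le_of_le' tendsto_const_nhds hlim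
    (hpos.mono fun ε hε => tsum_nonneg fun k => Set.indicator_nonneg
      (fun k _ => statPi_nonneg (Real.rpow_nonneg (div_pos hx₀ hε).le α) k) k)
    (hpos.mono fun ε hε => tsum_indicator_statPi_far_le hα hx₀ hδ hδx hε)
end

theorem stationary_distribution_weak_convergence
    (α θ γ : ℝ) (hα : 1 ≤ α) (hθ : 0 < θ) (hγ : 0 < γ)
    (f : ℝ → ℝ) (hf : Continuous f) (hbd : ∃ M : ℝ, ∀ x : ℝ, |f x| ≤ M) :
    Filter.Tendsto
      (fun ε : ℝ => ∑' k : ℕ, statPi α (θ / (γ * ε ^ α)) k * f (ε * (k : ℝ)))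
      (nhdsWithin 0 (Set.Ioi 0)) (nhds (f ((θ / γ) ^ (1 / α)))) := by
  set x₀ := (θ / γ) ^ (1 / α)
  have hx₀ : 0 < x₀ := by positivity
  have hpos : ∀ᶠ ε in 𝓝[>] (0 : ℝ), 0 < ε := self_mem_nhdsWithin
  have hlam : ∀ ε : ℝ, 0 < ε → θ / (γ * ε ^ α) = (x₀ / ε) ^ α := fun ε hε => by
    rw [Real.div_rpow hx₀.le hε.le, ← Real.rpow_mul (div_pos hθ hγ).le,
      one_div_mul_cancel (zero_lt_one.trans_le hα).ne', Real.rpow_one, div_div]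
  refine (tendsto_tsum_mul_of_concentration (p := fun ε => statPi α ((x₀ / ε) ^ α))
    (y := fun ε k => ε * k) ?_ ?_ hf.continuousAt hbd).congr' ?_
  · filter_upwards [hpos] with ε hε
    have hlam0 := Real.rpow_nonneg (div_pos hx₀ hε).le α
    exact ⟨statPi_nonneg hlam0, hasSum_statPi hα hlam0⟩
  · filter_upwards [Ioo_mem_nhdsGT (by positivity : 0 < 2 * x₀)] with δ ⟨hδ, hδx⟩
    exact tendsto_tsum_indicator_statPi_far hα hx₀ hδ hδx.le
  · filter_upwards [hpos] with ε hε
    rw [hlam ε hε]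
end

section
/- Let α ≥ 1 be real and θ, γ > 0, and let f : ℝ → ℝ be twice continuously differentiable with compact support. For ε > 0 define L_ε f : [0,∞) → ℝ by L_ε f(z) = (γ·z^α/ε)·(f(z−ε) − f(z)) + (θ/ε)·(f(z+ε) − f(z)). Then lim_{ε→0⁺} sup_{z ≥ 0} |L_ε f(z) − (θ − γ·z^α)·f′(z)| = 0. -/
open scoped BigOperators

/-- Generator of the rescaled number-of-colonies process:
`L_ε f(z) = (γ z^α/ε)(f(z-ε) - f z) + (θ/ε)(f(z+ε) - f z)`, with `z^α` the real power. -/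
noncomputable def genL (α θ γ ε : ℝ) (f : ℝ → ℝ) (z : ℝ) : ℝ :=
  (γ * z ^ α / ε) * (f (z - ε) - f z) + (θ / ε) * (f (z + ε) - f z)

/-!
Subtracting `(θ - γ z^α) f'(z)` leaves `γ z^α` and `θ` times the first-order Taylor remainders of
`f` at `z` with steps `∓ε`, divided by `ε`. Since `f'` is Lipschitz (it is `C¹` with compact
support), each remainder is `O(ε²)`, so the error is `O((γ z^α + θ) ε)`. This is uniform in `z`
because the error vanishes once `z - ε` lies to the right of the support of `f`, while `z^α` is
bounded on the remaining bounded range of `z`.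
-/

open Set Filter Topology NNReal

theorem norm_sub_sub_smul_le_of_lipschitzWith {E : Type*} [NormedAddCommGroup E]
    [NormedSpace ℝ E] {f f' : ℝ → E} {K : ℝ≥0} (hf : ∀ x, HasDerivAt f (f' x) x)
    (hf' : LipschitzWith K f') (z h : ℝ) :
    ‖f (z + h) - f z - h • f' z‖ ≤ K * h ^ 2 := by
  have hg : ∀ x, HasDerivAt (fun y => f y - y • f' z) (f' x - f' z) x := fun x => by
    simpa using (hf x).fun_sub ((hasDerivAt_id x).smul_const (f' z))
  have hbound : ∀ x ∈ uIcc z (z + h), ‖f' x - f' z‖ ≤ K * |h| := fun x hx => by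
    calc ‖f' x - f' z‖ ≤ K * |x - z| := by
          simpa [dist_eq_norm, Real.dist_eq] using hf'.dist_le_mul x z
      _ ≤ K * |h| :=
        mul_le_mul_of_nonneg_left (by simpa using abs_sub_left_of_mem_uIcc hx) K.2
  have hmvt := (convex_uIcc z (z + h)).norm_image_sub_le_of_norm_hasDerivWithin_le
    (fun x _ => (hg x).hasDerivWithinAt) hbound left_mem_uIcc right_mem_uIcc
  calc ‖f (z + h) - f z - h • f' z‖
      = ‖(f (z + h) - (z + h) • f' z) - (f z - z • f' z)‖ := by congr 1; rw [add_smul]; abel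
    _ ≤ K * |h| * ‖z + h - z‖ := hmvt
    _ = K * h ^ 2 := by
        rw [add_sub_cancel_left, Real.norm_eq_abs, mul_assoc, ← abs_mul, ← sq, abs_sq]

theorem abs_genL_sub_le {α θ γ ε z : ℝ} {f : ℝ → ℝ} {K : ℝ≥0} (hf : Differentiable ℝ f)
    (hf' : LipschitzWith K (deriv f)) (hz : 0 ≤ z) (hε : 0 < ε) :
    |genL α θ γ ε f z - (θ - γ * z ^ α) * deriv f z| ≤ (|γ| * z ^ α + |θ|) * K * ε := by
  set r : ℝ → ℝ := fun h => (f (z + h) - f z - h * deriv f z) / ε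
  have hr : ∀ h, |h| = ε → |r h| ≤ K * ε := fun h hh => by
    have := norm_sub_sub_smul_le_of_lipschitzWith (fun x => (hf x).hasDerivAt) hf' z h
    rw [Real.norm_eq_abs, smul_eq_mul, ← sq_abs, hh] at this
    rw [abs_div, abs_of_pos hε, div_le_iff₀ hε]
    linarith
  have hsplit :
      genL α θ γ ε f z - (θ - γ * z ^ α) * deriv f z = γ * z ^ α * r (-ε) + θ * r ε := by
    simp only [genL, r, ← sub_eq_add_neg]
    field_simp
    ring
  have hzα : 0 ≤ z ^ α := Real.rpow_nonneg hz α
  calc |genL α θ γ ε f z - (θ - γ * z ^ α) * deriv f z|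
      ≤ |γ| * z ^ α * |r (-ε)| + |θ| * |r ε| := by
        rw [hsplit]
        refine (abs_add_le _ _).trans_eq ?_
        rw [abs_mul, abs_mul, abs_mul, abs_of_nonneg hzα]
    _ ≤ |γ| * z ^ α * (K * ε) + |θ| * (K * ε) := by
        gcongr
        · exact hr _ (by rw [abs_neg, abs_of_pos hε])
        · exact hr _ (abs_of_pos hε)
    _ = (|γ| * z ^ α + |θ|) * K * ε := by ring

theorem genL_sub_eq_zero_of_forall_le {α θ γ ε z R : ℝ} {f : ℝ → ℝ}
    (hR : ∀ x, R ≤ x → f x = 0) (hε : 0 < ε) (hz : R ≤ z - ε) :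
    genL α θ γ ε f z - (θ - γ * z ^ α) * deriv f z = 0 := by
  have hderiv : deriv f z = 0 := by
    have : f =ᶠ[𝓝 z] 0 := (eventually_ge_nhds (by linarith : R < z)).mono hR
    simpa using this.deriv_eq
  simp only [genL, hderiv, hR _ hz, hR z (by linarith), hR (z + ε) (by linarith)]
  ring

theorem HasCompactSupport.exists_forall_le_eq_zero {f : ℝ → ℝ} (hf : HasCompactSupport f) :
    ∃ R, ∀ x, R ≤ x → f x = 0 := by
  have : f =ᶠ[atTop] 0 := (hasCompactSupport_iff_eventuallyEq.mp hf).filter_mono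
    (by rw [coclosedCompact_eq_cocompact]; exact atTop_le_cocompact)
  exact eventually_atTop.mp this

theorem exists_abs_genL_sub_le_mul {α θ γ R : ℝ} {f : ℝ → ℝ} {K : ℝ≥0} (hα : 0 ≤ α)
    (hf : Differentiable ℝ f) (hf' : LipschitzWith K (deriv f)) (hR : ∀ x, R ≤ x → f x = 0) :
    ∃ C, ∀ ε ∈ Ioo (0 : ℝ) 1, ∀ z : ℝ, 0 ≤ z →
      |genL α θ γ ε f z - (θ - γ * z ^ α) * deriv f z| ≤ C * ε := by
  refine ⟨(|γ| * (|R| + 1) ^ α + |θ|) * K, ?_⟩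
  rintro ε ⟨hε₀, hε₁⟩ z hz
  rcases le_or_gt z (|R| + 1) with hzR | hzR
  · refine (abs_genL_sub_le hf hf' hz hε₀).trans ?_
    gcongr
  · rw [genL_sub_eq_zero_of_forall_le hR hε₀ (by linarith [le_abs_self R]), abs_zero]
    positivity

theorem generator_convergence_general
    (α θ γ : ℝ) (hα : 1 ≤ α)
    (f : ℝ → ℝ) (hf : ContDiff ℝ 2 f) (hsupp : HasCompactSupport f) :
    Filter.Tendsto
      (fun ε : ℝ =>
        ⨆ z : Set.Ici (0 : ℝ),
          |genL α θ γ ε f z - (θ - γ * (z : ℝ) ^ α) * deriv f z|)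
      (nhdsWithin 0 (Set.Ioi 0)) (nhds 0) := by
  obtain ⟨hd, -, hf₁⟩ := (contDiff_succ_iff_deriv (n := 1)).mp hf
  obtain ⟨K, hK⟩ := hf₁.lipschitzWith_of_hasCompactSupport hsupp.deriv one_ne_zero
  obtain ⟨R, hR⟩ := hsupp.exists_forall_le_eq_zero
  obtain ⟨C, hC⟩ := exists_abs_genL_sub_le_mul (θ := θ) (γ := γ) (by linarith) hd hK hR
  refine squeeze_zero' (g := fun ε => C * ε)
    (Eventually.of_forall fun ε => Real.iSup_nonneg fun z => abs_nonneg _) ?_ ?_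
  · filter_upwards [Ioo_mem_nhdsGT one_pos] with ε hε
    exact Real.iSup_le (fun z => hC ε hε z z.2) ((abs_nonneg _).trans (hC ε hε 0 le_rfl))
  · exact ((continuous_const_mul C).tendsto' 0 0 (mul_zero C)).mono_left nhdsWithin_le_nhds

theorem generator_convergence
    (α θ γ : ℝ) (hα : 1 ≤ α) (hθ : 0 < θ) (hγ : 0 < γ)
    (f : ℝ → ℝ) (hf : ContDiff ℝ 2 f) (hsupp : HasCompactSupport f) :
    Filter.Tendsto
      (fun ε : ℝ =>
        ⨆ z : Set.Ici (0 : ℝ),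
          |genL α θ γ ε f z - (θ - γ * (z : ℝ) ^ α) * deriv f z|)
      (nhdsWithin 0 (Set.Ioi 0)) (nhds 0) :=
  generator_convergence_general α θ γ hα f hf hsupp
end

section
/- Let n ≥ 1 be an integer, q > 0 and t ≥ 0. Set r₀ = (q + e^{−(1+q)t})/(1+q) and r₁ = q(1 − e^{−(1+q)t})/(1+q) (both lie in [0,1]). For x ∈ {0,…,n} define the probability mass function μ_x on {0,…,n} by μ_x(j) = ∑_{a=0}^{min(x,j)} C(x,a)·r₀^a·(1−r₀)^{x−a}·C(n−x, j−a)·r₁^{j−a}·(1−r₁)^{(n−x)−(j−a)} (terms with j−a > n−x being zero). Then for all x, y ∈ {0,…,n}: ∑_{j=0}^n |μ_x(j) − μ_y(j)| ≤ 2n·e^{−(1+q)t}. -/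
open scoped BigOperators

/-- Law at time `t` of the number of chains in state 0 among `n` independent two-state
chains, `x` of which start in state 0: a convolution of two binomials with success
probabilities `r0 = P₀₀(t)` and `r1 = P₁₀(t)`. -/
noncomputable def muPMF (n x : ℕ) (r0 r1 : ℝ) (j : ℕ) : ℝ :=
  ∑ a ∈ Finset.range (min x j + 1),
    (Nat.choose x a : ℝ) * r0 ^ a * (1 - r0) ^ (x - a) *
      (Nat.choose (n - x) (j - a) : ℝ) * r1 ^ (j - a) * (1 - r1) ^ ((n - x) - (j - a))

/-!
`μ_x` has generating function `(r₀X + 1 - r₀)^x (r₁X + 1 - r₁)^(n-x)`. Moving one chain from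
state 1 to state 0 replaces a factor `r₁X + 1 - r₁` by `r₀X + 1 - r₀`, so
`μ_{x+1} - μ_x` has generating function `(r₀ - r₁)(X - 1)G` with `G` the generating function of
a probability vector; its coefficients have ℓ¹-norm at most `2|r₀ - r₁|`. Telescoping over
`|x - y| ≤ n` steps and `r₀ - r₁ = e^{-(1+q)t}` give the bound.
-/

open Finset Polynomial

namespace Polynomial

theorem sum_range_coeff_le_eval_one {P : ℝ[X]} (hP : ∀ j, 0 ≤ P.coeff j) (N : ℕ) :
    ∑ j ∈ range N, P.coeff j ≤ P.eval 1 := by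
  calc ∑ j ∈ range N, P.coeff j ≤ ∑ j ∈ range (max N (P.natDegree + 1)), P.coeff j :=
        sum_le_sum_of_subset_of_nonneg (range_subset_range.2 (le_max_left _ _))
          fun j _ _ => hP j
    _ = P.eval 1 := by
        rw [eval_eq_sum_range' (n := max N (P.natDegree + 1)) (by omega)]
        simp

theorem sum_range_abs_coeff_X_sub_one_mul_le {P : ℝ[X]} (hP : ∀ j, 0 ≤ P.coeff j) (N : ℕ) :
    ∑ j ∈ range N, |((X - 1) * P).coeff j| ≤ 2 * P.eval 1 := by
  have hXP : ∀ j, 0 ≤ (X * P).coeff j := by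
    rintro (_ | j)
    · simp
    · simpa only [coeff_X_mul] using hP j
  calc ∑ j ∈ range N, |((X - 1) * P).coeff j|
      ≤ ∑ j ∈ range N, ((X * P).coeff j + P.coeff j) := by
        gcongr with j
        rw [sub_mul, one_mul, coeff_sub, abs_sub_le_iff]
        constructor <;> linarith [hXP j, hP j]
    _ ≤ (X * P).eval 1 + P.eval 1 := by
        rw [sum_add_distrib]
        exact add_le_add (sum_range_coeff_le_eval_one hXP N) (sum_range_coeff_le_eval_one hP N)
    _ = 2 * P.eval 1 := by rw [eval_mul, eval_X, one_mul, two_mul]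

end Polynomial

noncomputable def binomialPGF (m : ℕ) (p : ℝ) : ℝ[X] := (C p * X + C (1 - p)) ^ m

theorem coeff_binomialPGF (m : ℕ) (p : ℝ) (k : ℕ) :
    (binomialPGF m p).coeff k = m.choose k * p ^ k * (1 - p) ^ (m - k) := by
  have hterm : ∀ i, (C p * X) ^ i * C (1 - p) ^ (m - i) * (m.choose i : ℝ[X]) =
      C (m.choose i * p ^ i * (1 - p) ^ (m - i)) * X ^ i := by
    intro i
    simp only [map_mul, map_pow, map_natCast]
    ring
  simp only [binomialPGF, add_pow, hterm, finsetSum_coeff, coeff_C_mul_X_pow, sum_ite_eq,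
    mem_range]
  split_ifs with hk
  · rfl
  · simp [Nat.choose_eq_zero_of_lt (by omega : m < k)]

theorem eval_one_binomialPGF (m : ℕ) (p : ℝ) : (binomialPGF m p).eval 1 = 1 := by
  simp [binomialPGF]

theorem muPMF_eq_coeff (n x : ℕ) (r0 r1 : ℝ) (j : ℕ) :
    muPMF n x r0 r1 j = (binomialPGF x r0 * binomialPGF (n - x) r1).coeff j := by
  rw [coeff_mul, Nat.sum_antidiagonal_eq_sum_range_succ
    (fun a b => (binomialPGF x r0).coeff a * (binomialPGF (n - x) r1).coeff b)]
  simp only [coeff_binomialPGF, ← mul_assoc]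
  refine sum_subset (range_subset_range.2 (by omega)) fun a ha hax => ?_
  rw [Nat.choose_eq_zero_of_lt (by simp at ha hax; omega)]
  simp

theorem binomialPGF_succ_mul_sub (x m : ℕ) (r0 r1 : ℝ) :
    binomialPGF (x + 1) r0 * binomialPGF m r1 - binomialPGF x r0 * binomialPGF (m + 1) r1 =
      C (r0 - r1) * ((X - 1) * (binomialPGF x r0 * binomialPGF m r1)) := by
  simp only [binomialPGF, pow_succ, map_sub, map_one]
  ring

section TotalVariation

variable {r0 r1 : ℝ}

theorem muPMF_nonneg (h0 : 0 ≤ r0) (h0' : r0 ≤ 1) (h1 : 0 ≤ r1) (h1' : r1 ≤ 1) (n x j : ℕ) :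
    0 ≤ muPMF n x r0 r1 j := by
  have : 0 ≤ 1 - r0 := by linarith
  have : 0 ≤ 1 - r1 := by linarith
  unfold muPMF
  positivity

theorem sum_abs_muPMF_succ_sub_le (h0 : 0 ≤ r0) (h0' : r0 ≤ 1) (h1 : 0 ≤ r1) (h1' : r1 ≤ 1)
    {n x : ℕ} (hx : x + 1 ≤ n) (N : ℕ) :
    ∑ j ∈ range N, |muPMF n (x + 1) r0 r1 j - muPMF n x r0 r1 j| ≤ 2 * |r0 - r1| := by
  set G := binomialPGF x r0 * binomialPGF (n - 1 - x) r1
  have hG : ∀ j, 0 ≤ G.coeff j := fun j => by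
    simpa only [muPMF_eq_coeff] using muPMF_nonneg h0 h0' h1 h1' (n - 1) x j
  have hdiff : ∀ j, muPMF n (x + 1) r0 r1 j - muPMF n x r0 r1 j =
      (r0 - r1) * ((X - 1) * G).coeff j := fun j => by
    rw [muPMF_eq_coeff, muPMF_eq_coeff, ← coeff_sub, show n - x = n - 1 - x + 1 by omega,
      show n - (x + 1) = n - 1 - x by omega, binomialPGF_succ_mul_sub, coeff_C_mul]
  calc ∑ j ∈ range N, |muPMF n (x + 1) r0 r1 j - muPMF n x r0 r1 j|
      = |r0 - r1| * ∑ j ∈ range N, |((X - 1) * G).coeff j| := by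
        simp only [hdiff, abs_mul, mul_sum]
    _ ≤ |r0 - r1| * (2 * G.eval 1) := by
        gcongr
        exact sum_range_abs_coeff_X_sub_one_mul_le hG N
    _ = 2 * |r0 - r1| := by
        rw [eval_mul, eval_one_binomialPGF, eval_one_binomialPGF]
        ring

theorem sum_abs_muPMF_sub_le_of_le (h0 : 0 ≤ r0) (h0' : r0 ≤ 1) (h1 : 0 ≤ r1) (h1' : r1 ≤ 1)
    {n x y : ℕ} (hxy : x ≤ y) (hy : y ≤ n) (N : ℕ) :
    ∑ j ∈ range N, |muPMF n x r0 r1 j - muPMF n y r0 r1 j| ≤ 2 * (y - x : ℕ) * |r0 - r1| := by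
  calc ∑ j ∈ range N, |muPMF n x r0 r1 j - muPMF n y r0 r1 j|
      ≤ ∑ j ∈ range N, ∑ k ∈ Ico x y, |muPMF n k r0 r1 j - muPMF n (k + 1) r0 r1 j| :=
        sum_le_sum fun j _ => dist_le_Ico_sum_dist (fun k => muPMF n k r0 r1 j) hxy
    _ = ∑ k ∈ Ico x y, ∑ j ∈ range N, |muPMF n (k + 1) r0 r1 j - muPMF n k r0 r1 j| := by
        rw [sum_comm]
        simp only [abs_sub_comm]
    _ ≤ ∑ _k ∈ Ico x y, 2 * |r0 - r1| :=
        sum_le_sum fun k hk =>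
          sum_abs_muPMF_succ_sub_le h0 h0' h1 h1' (by simp at hk; omega) N
    _ = 2 * (y - x : ℕ) * |r0 - r1| := by
        rw [sum_const, Nat.card_Ico, nsmul_eq_mul]
        ring

theorem sum_abs_muPMF_sub_le (h0 : 0 ≤ r0) (h0' : r0 ≤ 1) (h1 : 0 ≤ r1) (h1' : r1 ≤ 1)
    {n x y : ℕ} (hx : x ≤ n) (hy : y ≤ n) (N : ℕ) :
    ∑ j ∈ range N, |muPMF n x r0 r1 j - muPMF n y r0 r1 j| ≤ 2 * n * |r0 - r1| := by
  wlog hxy : x ≤ y generalizing x y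
  · simpa only [abs_sub_comm] using this hy hx (le_of_not_ge hxy)
  calc _ ≤ 2 * (y - x : ℕ) * |r0 - r1| := sum_abs_muPMF_sub_le_of_le h0 h0' h1 h1' hxy hy N
    _ ≤ 2 * n * |r0 - r1| := by gcongr; omega

end TotalVariation

theorem phi_mixing_estimate_general (n : ℕ) (q t : ℝ) (hq : 0 < q) (ht : 0 ≤ t) :
    (q + Real.exp (-(1 + q) * t)) / (1 + q) ∈ Set.Icc (0 : ℝ) 1 ∧
    q * (1 - Real.exp (-(1 + q) * t)) / (1 + q) ∈ Set.Icc (0 : ℝ) 1 ∧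
    ∀ x y : ℕ, x ≤ n → y ≤ n →
      ∑ j ∈ Finset.range (n + 1),
          |muPMF n x ((q + Real.exp (-(1 + q) * t)) / (1 + q))
              (q * (1 - Real.exp (-(1 + q) * t)) / (1 + q)) j
            - muPMF n y ((q + Real.exp (-(1 + q) * t)) / (1 + q))
              (q * (1 - Real.exp (-(1 + q) * t)) / (1 + q)) j|
        ≤ 2 * (n : ℝ) * Real.exp (-(1 + q) * t) := by
  set E := Real.exp (-(1 + q) * t)
  have hE0 : 0 < E := Real.exp_pos _
  have hE1 : E ≤ 1 := Real.exp_le_one_iff.2 (by nlinarith)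
  have h1q : 0 < 1 + q := by linarith
  have hr0 : (q + E) / (1 + q) ∈ Set.Icc (0 : ℝ) 1 :=
    ⟨by positivity, (div_le_one h1q).2 (by linarith)⟩
  have hr1 : q * (1 - E) / (1 + q) ∈ Set.Icc (0 : ℝ) 1 :=
    ⟨div_nonneg (mul_nonneg hq.le (by linarith)) h1q.le, (div_le_one h1q).2 (by nlinarith)⟩
  have hgap : (q + E) / (1 + q) - q * (1 - E) / (1 + q) = E := by
    field_simp
    ring
  refine ⟨hr0, hr1, fun x y hx hy => ?_⟩
  have := sum_abs_muPMF_sub_le hr0.1 hr0.2 hr1.1 hr1.2 hx hy (n + 1)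
  rwa [hgap, abs_of_pos hE0] at this

theorem phi_mixing_estimate (n : ℕ) (hn : 1 ≤ n) (q t : ℝ) (hq : 0 < q) (ht : 0 ≤ t) :
    (q + Real.exp (-(1 + q) * t)) / (1 + q) ∈ Set.Icc (0 : ℝ) 1 ∧
    q * (1 - Real.exp (-(1 + q) * t)) / (1 + q) ∈ Set.Icc (0 : ℝ) 1 ∧
    ∀ x y : ℕ, x ≤ n → y ≤ n →
      ∑ j ∈ Finset.range (n + 1),
          |muPMF n x ((q + Real.exp (-(1 + q) * t)) / (1 + q))
              (q * (1 - Real.exp (-(1 + q) * t)) / (1 + q)) j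
            - muPMF n y ((q + Real.exp (-(1 + q) * t)) / (1 + q))
              (q * (1 - Real.exp (-(1 + q) * t)) / (1 + q)) j|
        ≤ 2 * (n : ℝ) * Real.exp (-(1 + q) * t) :=
  phi_mixing_estimate_general n q t hq ht
end
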